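/- arXiv:2404.09324 — 4 statements merged into one kernel-verified Lean document; each statement's English description precedes it below -/
import Mathlib

section
/- In a finite-horizon mean field game in which r(s,a,μ) and P(s'|s,a,μ) are continuous in μ (with respect to the simplex topology on P(S)), for every correlation device ρ the best-response correspondence has a closed graph: if (π_n) and (π'_n) are sequences of behavioral policies with π_n → π and π'_n → π' (pointwise convergence of all probability weights) and π_n ∈ BR(π'_n; ρ) for every n, then π ∈ BR(π'; ρ). -/
open Finset

/-- The probability simplex on a finite set `X`. -/
abbrev ProbVec (X : Type*) [Fintype X] : Type _ :=
  {p : X → ℝ // (∀ x, 0 ≤ p x) ∧ ∑ x, p x = 1}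

variable {S A Z : Type*} [Fintype S] [Fintype A] [Fintype Z] [Nonempty S] [Nonempty A] [Nonempty Z]

/-- Mean-field update `Φ(μ, π_t, z)(s') = Σ_s Σ_a μ(s) P(s'|s,a,μ) π_t(a|s,z)`. -/
noncomputable def mfStep (P : S → A → ProbVec S → ProbVec S)
    (μ : ProbVec S) (πt : S → Z → ProbVec A) (z : Z) : ProbVec S :=
  ⟨fun s' => ∑ s, ∑ a, μ.1 s * (P s a μ).1 s' * (πt s z).1 a, by
    constructor
    · intro s'
      refine sum_nonneg fun s _ => sum_nonneg fun a _ => ?_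
      exact mul_nonneg (mul_nonneg (μ.2.1 s) ((P s a μ).2.1 s')) ((πt s z).2.1 a)
    · have h1 : ∀ s a, ∑ s', μ.1 s * (P s a μ).1 s' * (πt s z).1 a
          = μ.1 s * (πt s z).1 a := by
        intro s a
        have h : ∀ s', μ.1 s * (P s a μ).1 s' * (πt s z).1 a
            = (μ.1 s * (πt s z).1 a) * (P s a μ).1 s' := fun s' => by ring
        simp only [h, ← Finset.mul_sum, (P s a μ).2.2, mul_one]
      calc ∑ s', ∑ s, ∑ a, μ.1 s * (P s a μ).1 s' * (πt s z).1 a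
          = ∑ s, ∑ a, ∑ s', μ.1 s * (P s a μ).1 s' * (πt s z).1 a := by
            rw [Finset.sum_comm]
            exact Finset.sum_congr rfl fun s _ => Finset.sum_comm
        _ = ∑ s, ∑ a, μ.1 s * (πt s z).1 a :=
            Finset.sum_congr rfl fun s _ => Finset.sum_congr rfl fun a _ => h1 s a
        _ = ∑ s, μ.1 s := by
            refine Finset.sum_congr rfl fun s _ => ?_
            rw [← Finset.mul_sum, (πt s z).2.2, mul_one]
        _ = 1 := μ.2.2⟩

/-- Mean-field flow of the policy `π` along the signal sequence `zs`. -/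
noncomputable def mfFlow (P : S → A → ProbVec S → ProbVec S) (μ0 : ProbVec S)
    (π : ℕ → S → Z → ProbVec A) (zs : ℕ → Z) : ℕ → ProbVec S
  | 0 => μ0
  | t + 1 => mfStep P (mfFlow P μ0 π zs t) (π t) (zs t)

/-- Expected discounted return-to-go `E[Σ_{i=t}^{t+n} γ^{i-t} r(s_i,a_i,μ_i)]` for the
individual policy `π` against the population policy `π'` under the correlation device `ρ`,
given `n` further steps, current time `t`, current state `s` and current mean field `μ`. -/
noncomputable def Vrem (P : S → A → ProbVec S → ProbVec S) (r : S → A → ProbVec S → ℝ) (γ : ℝ)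
    (π π' : ℕ → S → Z → ProbVec A) (ρ : ℕ → ProbVec Z) : ℕ → ℕ → S → ProbVec S → ℝ
  | 0, t, s, μ => ∑ z, (ρ t).1 z * ∑ a, (π t s z).1 a * r s a μ
  | n + 1, t, s, μ => ∑ z, (ρ t).1 z * ∑ a, (π t s z).1 a *
      (r s a μ + γ * ∑ s', (P s a μ).1 s' *
        Vrem P r γ π π' ρ n (t + 1) s' (mfStep P μ (π' t) z))

/-- Expected return `J(π, π', ρ) = E[Σ_{t=0}^T γ^t r(s_t,a_t,μ_t)]`. -/
noncomputable def expRet (P : S → A → ProbVec S → ProbVec S) (r : S → A → ProbVec S → ℝ) (γ : ℝ)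
    (μ0 : ProbVec S) (T : ℕ) (π π' : ℕ → S → Z → ProbVec A) (ρ : ℕ → ProbVec Z) : ℝ :=
  ∑ s, μ0.1 s * Vrem P r γ π π' ρ T 0 s μ0

/-- Best-response set `BR(π; ρ)`. -/
def BR (P : S → A → ProbVec S → ProbVec S) (r : S → A → ProbVec S → ℝ) (γ : ℝ)
    (μ0 : ProbVec S) (T : ℕ) (π : ℕ → S → Z → ProbVec A) (ρ : ℕ → ProbVec Z) :
    Set (ℕ → S → Z → ProbVec A) :=
  {π' | ∀ π'', expRet P r γ μ0 T π'' π ρ ≤ expRet P r γ μ0 T π' π ρ}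

/-- Action-value function `Q_t^π(s,a,μ,z;π')` by backward recursion, with `n` steps to go. -/
noncomputable def Qval (P : S → A → ProbVec S → ProbVec S) (r : S → A → ProbVec S → ℝ) (γ : ℝ)
    (π π' : ℕ → S → Z → ProbVec A) (ρ : ℕ → ProbVec Z) : ℕ → ℕ → S → A → ProbVec S → Z → ℝ
  | 0, _, s, a, μ, _ => r s a μ
  | n + 1, t, s, a, μ, z => r s a μ + γ * ∑ z', (ρ (t + 1)).1 z' * ∑ s', (P s a μ).1 s' *
      ∑ a', (π (t + 1) s' z').1 a' *
        Qval P r γ π π' ρ n (t + 1) s' a' (mfStep P μ (π' t) z) z'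

/-- Optimal action-value function `Q*_t(s,a,μ,z;π')` by backward recursion. -/
noncomputable def Qstar [Nonempty A] (P : S → A → ProbVec S → ProbVec S) (r : S → A → ProbVec S → ℝ)
    (γ : ℝ) (π' : ℕ → S → Z → ProbVec A) (ρ : ℕ → ProbVec Z) : ℕ → ℕ → S → A → ProbVec S → Z → ℝ
  | 0, _, s, a, μ, _ => r s a μ
  | n + 1, t, s, a, μ, z => r s a μ + γ * ∑ z', (ρ (t + 1)).1 z' * ∑ s', (P s a μ).1 s' *
      (Finset.univ.sup' Finset.univ_nonempty fun a' =>
        Qstar P r γ π' ρ n (t + 1) s' a' (mfStep P μ (π' t) z) z')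

/-- Swap gap `Δ_t(s, μ, u; π, ρ)` in a horizon-`T` game. -/
noncomputable def swapGap (P : S → A → ProbVec S → ProbVec S) (r : S → A → ProbVec S → ℝ) (γ : ℝ)
    (π : ℕ → S → Z → ProbVec A) (ρ : ℕ → ProbVec Z) (T t : ℕ) (s : S) (μ : ProbVec S) (u : A → A) :
    ℝ :=
  ∑ z, ∑ a, (ρ t).1 z * (π t s z).1 a *
    (Qval P r γ π π ρ (T - t) t s (u a) μ z - Qval P r γ π π ρ (T - t) t s a μ z)

/-- `(π, ρ)` is an Adaptive Mean Field Correlated Equilibrium. -/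
def IsAMFCE (P : S → A → ProbVec S → ProbVec S) (r : S → A → ProbVec S → ℝ) (γ : ℝ)
    (μ0 : ProbVec S) (T : ℕ) (π : ℕ → S → Z → ProbVec A) (ρ : ℕ → ProbVec Z) : Prop :=
  ∀ t ≤ T, ∀ zs : ℕ → Z, ∀ s : S, ∀ u : A → A,
    swapGap P r γ π ρ T t s (mfFlow P μ0 π zs t) u ≤ 0

/-- Expected return-to-go when the agent plays the fixed actions `as` while the
population follows `π` under the device `ρ`. -/
noncomputable def Ufix (P : S → A → ProbVec S → ProbVec S) (r : S → A → ProbVec S → ℝ) (γ : ℝ)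
    (π : ℕ → S → Z → ProbVec A) (ρ : ℕ → ProbVec Z) (as : ℕ → A) : ℕ → ℕ → S → ProbVec S → ℝ
  | 0, t, s, μ => r s (as t) μ
  | n + 1, t, s, μ => r s (as t) μ + γ * ∑ z, (ρ t).1 z * ∑ s', (P s (as t) μ).1 s' *
      Ufix P r γ π ρ as n (t + 1) s' (mfStep P μ (π t) z)

/-- Correlated Imitation Gap `R(a_{0:T}, π, ρ)`. -/
noncomputable def CIG (P : S → A → ProbVec S → ProbVec S) (r : S → A → ProbVec S → ℝ) (γ : ℝ)
    (μ0 : ProbVec S) (T : ℕ) (π : ℕ → S → Z → ProbVec A) (ρ : ℕ → ProbVec Z) (as : ℕ → A) : ℝ :=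
  (∑ s, μ0.1 s * Ufix P r γ π ρ as T 0 s μ0) - expRet P r γ μ0 T π π ρ

/-- Kullback–Leibler divergence on a finite set (`0 log 0 = 0`). -/
noncomputable def KLdiv {X : Type*} [Fintype X] (p q : X → ℝ) : ℝ :=
  ∑ x, p x * Real.log (p x / q x)

/-- Jensen–Shannon divergence on a finite set. -/
noncomputable def JSdiv {X : Type*} [Fintype X] (p q : X → ℝ) : ℝ :=
  (KLdiv p (fun x => (p x + q x) / 2) + KLdiv q (fun x => (p x + q x) / 2)) / 2

/-- ℓ¹ distance on a finite set. -/
noncomputable def l1dist {X : Type*} [Fintype X] (p q : X → ℝ) : ℝ :=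
  ∑ x, |p x - q x|

/-- Occupancy measure `η_t^π`: the joint law of `((z₀,…,z_t), s_t, a_t)`. -/
noncomputable def occ (P : S → A → ProbVec S → ProbVec S) (μ0 : ProbVec S)
    (π : ℕ → S → Z → ProbVec A) (ρ : ℕ → ProbVec Z) (t : ℕ) :
    ((Fin (t + 1) → Z) × S × A) → ℝ := fun x =>
  (∏ k : Fin (t + 1), (ρ k.1).1 (x.1 k)) *
    (mfFlow P μ0 π (fun k => x.1 ⟨min k t, Nat.lt_succ_of_le (min_le_right k t)⟩) t).1 x.2.1 *
    (π t x.2.1 (x.1 ⟨t, Nat.lt_succ_self t⟩)).1 x.2.2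

lemma tendstoProbVec {X : Type*} [Fintype X] {f : ℕ → ProbVec X} {p : ProbVec X}
    (h : ∀ x, Filter.Tendsto (fun n => (f n).1 x) Filter.atTop (nhds (p.1 x))) :
    Filter.Tendsto f Filter.atTop (nhds p) := by
  rw [tendsto_subtype_rng]
  exact tendsto_pi_nhds.2 h

lemma Vrem_tendsto (P : S → A → ProbVec S → ProbVec S) (r : S → A → ProbVec S → ℝ) (γ : ℝ)
    (hrcont : ∀ s a, Continuous fun μ : ProbVec S => r s a μ)
    (hPcont : ∀ s a s', Continuous fun μ : ProbVec S => (P s a μ).1 s')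
    (ρ : ℕ → ProbVec Z)
    (πseq π'seq : ℕ → ℕ → S → Z → ProbVec A) (π π' : ℕ → S → Z → ProbVec A)
    (hπconv : ∀ t s z a, Filter.Tendsto (fun n => (πseq n t s z).1 a) Filter.atTop
      (nhds ((π t s z).1 a)))
    (hπ'conv : ∀ t s z a, Filter.Tendsto (fun n => (π'seq n t s z).1 a) Filter.atTop
      (nhds ((π' t s z).1 a))) :
    ∀ (m t : ℕ) (s : S) (μseq : ℕ → ProbVec S) (μ : ProbVec S),
      (∀ x, Filter.Tendsto (fun n => (μseq n).1 x) Filter.atTop (nhds (μ.1 x))) →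
      Filter.Tendsto (fun n => Vrem P r γ (πseq n) (π'seq n) ρ m t s (μseq n)) Filter.atTop
        (nhds (Vrem P r γ π π' ρ m t s μ)) := by
  intro m
  induction m with
  | zero =>
    intro t s μseq μ hμ
    have hμ' : Filter.Tendsto μseq Filter.atTop (nhds μ) := tendstoProbVec hμ
    simp only [Vrem]
    refine tendsto_finset_sum _ fun z _ => Filter.Tendsto.const_mul _ ?_
    refine tendsto_finset_sum _ fun a _ => (hπconv t s z a).mul ?_
    exact ((hrcont s a).tendsto μ).comp hμ'
  | succ m ih =>
    intro t s μseq μ hμ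
    have hμ' : Filter.Tendsto μseq Filter.atTop (nhds μ) := tendstoProbVec hμ
    simp only [Vrem]
    refine tendsto_finset_sum _ fun z _ => Filter.Tendsto.const_mul _ ?_
    refine tendsto_finset_sum _ fun a _ => (hπconv t s z a).mul (Filter.Tendsto.add
      (((hrcont s a).tendsto μ).comp hμ') (Filter.Tendsto.const_mul _ ?_))
    refine tendsto_finset_sum _ fun s' _ => Filter.Tendsto.mul
      (((hPcont s a s').tendsto μ).comp hμ') ?_
    refine ih (t + 1) s' _ _ fun x => ?_
    simp only [mfStep]
    refine tendsto_finset_sum _ fun s1 _ => tendsto_finset_sum _ fun a1 _ => ?_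
    exact ((hμ s1).mul (((hPcont s1 a1 x).tendsto μ).comp hμ')).mul (hπ'conv t s1 z a1)

lemma expRet_tendsto (P : S → A → ProbVec S → ProbVec S) (r : S → A → ProbVec S → ℝ) (γ : ℝ)
    (μ0 : ProbVec S) (T : ℕ)
    (hrcont : ∀ s a, Continuous fun μ : ProbVec S => r s a μ)
    (hPcont : ∀ s a s', Continuous fun μ : ProbVec S => (P s a μ).1 s')
    (ρ : ℕ → ProbVec Z)
    (πseq π'seq : ℕ → ℕ → S → Z → ProbVec A) (π π' : ℕ → S → Z → ProbVec A)
    (hπconv : ∀ t s z a, Filter.Tendsto (fun n => (πseq n t s z).1 a) Filter.atTop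
      (nhds ((π t s z).1 a)))
    (hπ'conv : ∀ t s z a, Filter.Tendsto (fun n => (π'seq n t s z).1 a) Filter.atTop
      (nhds ((π' t s z).1 a))) :
    Filter.Tendsto (fun n => expRet P r γ μ0 T (πseq n) (π'seq n) ρ) Filter.atTop
      (nhds (expRet P r γ μ0 T π π' ρ)) := by
  unfold expRet
  refine tendsto_finset_sum _ fun s _ => Filter.Tendsto.const_mul _ ?_
  exact Vrem_tendsto P r γ hrcont hPcont ρ πseq π'seq π π' hπconv hπ'conv T 0 s
    (fun _ => μ0) μ0 (fun x => tendsto_const_nhds)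

/-- Closed graph of the best-response correspondence: if `r(s,a,μ)` and `P(s'|s,a,μ)` are
continuous in `μ`, `π_n → π` and `π'_n → π'` pointwise (in all probability weights), and
`π_n ∈ BR(π'_n; ρ)` for every `n`, then `π ∈ BR(π'; ρ)`. -/
theorem br_closed_graph
    (P : S → A → ProbVec S → ProbVec S) (r : S → A → ProbVec S → ℝ) (γ : ℝ)
    (hγ0 : 0 < γ) (hγ1 : γ ≤ 1) (μ0 : ProbVec S) (T : ℕ)
    (hrcont : ∀ s a, Continuous fun μ : ProbVec S => r s a μ)
    (hPcont : ∀ s a s', Continuous fun μ : ProbVec S => (P s a μ).1 s')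
    (ρ : ℕ → ProbVec Z)
    (πseq π'seq : ℕ → ℕ → S → Z → ProbVec A) (π π' : ℕ → S → Z → ProbVec A)
    (hπconv : ∀ t s z a, Filter.Tendsto (fun n => (πseq n t s z).1 a) Filter.atTop
      (nhds ((π t s z).1 a)))
    (hπ'conv : ∀ t s z a, Filter.Tendsto (fun n => (π'seq n t s z).1 a) Filter.atTop
      (nhds ((π' t s z).1 a)))
    (hBR : ∀ n, πseq n ∈ BR P r γ μ0 T (π'seq n) ρ) :
    π ∈ BR P r γ μ0 T π' ρ := by
  intro π''
  have hA : Filter.Tendsto (fun n => expRet P r γ μ0 T π'' (π'seq n) ρ) Filter.atTop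
      (nhds (expRet P r γ μ0 T π'' π' ρ)) :=
    expRet_tendsto P r γ μ0 T hrcont hPcont ρ (fun _ => π'') π'seq π'' π'
      (fun _ _ _ _ => tendsto_const_nhds) hπ'conv
  have hB : Filter.Tendsto (fun n => expRet P r γ μ0 T (πseq n) (π'seq n) ρ) Filter.atTop
      (nhds (expRet P r γ μ0 T π π' ρ)) :=
    expRet_tendsto P r γ μ0 T hrcont hPcont ρ πseq π'seq π π' hπconv hπ'conv
  exact le_of_tendsto_of_tendsto' hA hB fun n => hBR n π''
end

section
/- Every mean field Nash equilibrium can be transformed into an AMFCE: let π̄ = (π̄_t) with π̄_t(·|s) ∈ P(A) be a signal-independent policy and μ* the flow defined by μ*₀ = μ₀ and μ*_{t+1}(s') = Σ_{s∈S} Σ_{a∈A} P(s'|s,a,μ*_t) π̄_t(a|s) μ*_t(s). Fix z₀ ∈ Z, let ρ_t be the Dirac distribution at z₀ for every t, and define the lifted behavioral policy π by π_t(a|s,z) = π̄_t(a|s) for all z. If for every t, s, a, π̄_t(a|s) > 0 implies a ∈ argmax_{a'∈A} Q*_t(s,a',μ*_t,z₀;π), then (π, ρ) is an Adaptive Mean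 Field Correlated Equilibrium. -/
open Finset

variable {S A Z : Type*} [Fintype S] [Fintype A] [Fintype Z] [Nonempty S] [Nonempty A] [Nonempty Z]

/-- Every mean field Nash equilibrium can be transformed into an AMFCE: lift a
signal-independent MFNE policy `π̄` with consistent flow `μ*` to the behavioral policy
`π_t(a|s,z) = π̄_t(a|s)` and take the correlation device `ρ_t = δ_{z₀}`. If `π̄` only puts
mass on actions maximizing `Q*_t(s,·,μ*_t,z₀;π)`, then `(π, ρ)` is an AMFCE. -/
theorem mfne_to_amfce [DecidableEq Z]
    (P : S → A → ProbVec S → ProbVec S) (r : S → A → ProbVec S → ℝ) (γ : ℝ)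
    (hγ0 : 0 < γ) (hγ1 : γ ≤ 1) (μ0 : ProbVec S) (T : ℕ)
    (πbar : ℕ → S → ProbVec A) (z0 : Z)
    (π : ℕ → S → Z → ProbVec A) (hπ : ∀ t s z, π t s z = πbar t s)
    (ρ : ℕ → ProbVec Z) (hρ : ∀ t z, (ρ t).1 z = if z = z0 then 1 else 0)
    (μstar : ℕ → ProbVec S) (hμ0 : μstar 0 = μ0)
    (hμ : ∀ t s', (μstar (t + 1)).1 s'
      = ∑ s, ∑ a, (P s a (μstar t)).1 s' * (πbar t s).1 a * (μstar t).1 s)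
    (hopt : ∀ t ≤ T, ∀ s a, 0 < (πbar t s).1 a → ∀ a',
      Qstar P r γ π ρ (T - t) t s a' (μstar t) z0
        ≤ Qstar P r γ π ρ (T - t) t s a (μstar t) z0) :
    IsAMFCE P r γ μ0 T π ρ := by

  have hsum : ∀ (t : ℕ) (f : Z → ℝ), ∑ z, (ρ t).1 z * f z = f z0 := by
    intro t f
    rw [Finset.sum_eq_single z0]
    · simp [hρ]
    · intro b _ hb; simp [hρ, hb]
    · intro h; exact absurd (Finset.mem_univ z0) h
  have hstep : ∀ (t : ℕ) (z : Z), mfStep P (μstar t) (π t) z = μstar (t + 1) := by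
    intro t z
    apply Subtype.ext
    funext s'
    show (∑ s, ∑ a, (μstar t).1 s * (P s a (μstar t)).1 s' * (π t s z).1 a) = _
    rw [hμ]
    exact Finset.sum_congr rfl fun s _ => Finset.sum_congr rfl fun a _ => by
      rw [hπ]; ring
  have key : ∀ n t, t + n = T → ∀ s a,
      Qval P r γ π π ρ n t s a (μstar t) z0 = Qstar P r γ π ρ n t s a (μstar t) z0 := by
    intro n
    induction n with
    | zero => intro t _ s a; rfl
    | succ n ih =>
      intro t ht s a
      have ht1 : (t + 1) + n = T := by omega
      have ht1le : t + 1 ≤ T := by omega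
      have hTn : T - (t + 1) = n := by omega
      simp only [Qval, Qstar]
      rw [hsum (t+1), hsum (t+1), hstep]
      congr 2
      refine Finset.sum_congr rfl fun s' _ => ?_
      congr 1
      have hQ : ∀ a', Qval P r γ π π ρ n (t+1) s' a' (μstar (t+1)) z0
          = Qstar P r γ π ρ n (t+1) s' a' (μstar (t+1)) z0 := ih (t+1) ht1 s'
      simp only [hπ, hQ]
      have hw0 := (πbar (t+1) s').2.1
      have hw1 := (πbar (t+1) s').2.2
      apply le_antisymm
      · calc ∑ a', (πbar (t+1) s').1 a' * Qstar P r γ π ρ n (t+1) s' a' (μstar (t+1)) z0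
            ≤ ∑ a', (πbar (t+1) s').1 a' *
              (Finset.univ.sup' Finset.univ_nonempty fun a' =>
                Qstar P r γ π ρ n (t+1) s' a' (μstar (t+1)) z0) := by
              refine Finset.sum_le_sum fun a' _ => ?_
              exact mul_le_mul_of_nonneg_left (Finset.le_sup' (fun a' => Qstar P r γ π ρ n (t+1) s' a' (μstar (t+1)) z0) (Finset.mem_univ a')) (hw0 a')
          _ = _ := by rw [← Finset.sum_mul, hw1, one_mul]
      · calc (Finset.univ.sup' Finset.univ_nonempty fun a' =>
                Qstar P r γ π ρ n (t+1) s' a' (μstar (t+1)) z0)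
            = ∑ a', (πbar (t+1) s').1 a' *
              (Finset.univ.sup' Finset.univ_nonempty fun a' =>
                Qstar P r γ π ρ n (t+1) s' a' (μstar (t+1)) z0) := by
              rw [← Finset.sum_mul, hw1, one_mul]
          _ ≤ _ := by
            refine Finset.sum_le_sum fun a' _ => ?_
            rcases eq_or_lt_of_le (hw0 a') with h | h
            · rw [← h]; simp
            · refine mul_le_mul_of_nonneg_left ?_ (hw0 a')
              refine Finset.sup'_le _ _ fun a'' _ => ?_
              have := hopt (t+1) ht1le s' a' h a''
              rwa [hTn] at this
  have hflow : ∀ (zs : ℕ → Z) (t' : ℕ), mfFlow P μ0 π zs t' = μstar t' := by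
    intro zs t'
    induction t' with
    | zero => exact hμ0.symm
    | succ t' ih =>
      show mfStep P (mfFlow P μ0 π zs t') (π t') (zs t') = _
      rw [ih, hstep]
  intro t ht zs s u
  rw [hflow]
  have hrw : swapGap P r γ π ρ T t s (μstar t) u
      = ∑ z, (ρ t).1 z * ∑ a, (π t s z).1 a *
        (Qval P r γ π π ρ (T - t) t s (u a) (μstar t) z
          - Qval P r γ π π ρ (T - t) t s a (μstar t) z) := by
    unfold swapGap
    refine Finset.sum_congr rfl fun z _ => ?_
    rw [Finset.mul_sum]
    exact Finset.sum_congr rfl fun a _ => by ring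
  rw [hrw, hsum t]
  refine Finset.sum_nonpos fun a _ => ?_
  rw [hπ]
  rcases eq_or_lt_of_le ((πbar t s).2.1 a) with h | h
  · rw [← h, zero_mul]
  · have hkey : ∀ b, Qval P r γ π π ρ (T - t) t s b (μstar t) z0
        = Qstar P r γ π ρ (T - t) t s b (μstar t) z0 :=
      key (T - t) t (by omega) s
    have hd : Qval P r γ π π ρ (T - t) t s (u a) (μstar t) z0
        - Qval P r γ π π ρ (T - t) t s a (μstar t) z0 ≤ 0 := by
      rw [hkey, hkey, sub_nonpos]
      exact hopt t ht s a h (u a)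
    have := mul_le_mul_of_nonneg_left hd ((πbar t s).2.1 a)
    simpa using this
end

section
/- Simulation lemma under mean-field perturbation: in a finite-horizon mean field game satisfying the regularity conditions, fix k ≤ T, an initial state distribution ν ∈ P(S) at time k, actions a_k,…,a_T ∈ A, and two population-distribution sequences μ_k,…,μ_T and μ'_k,…,μ'_T in P(S). Let V = E[Σ_{t=k}^T γ^{t−k} r(s_t, a_t, μ_t)] where s_k ~ ν and s_{t+1} ~ P(·|s_t, a_t, μ_t), and let V' be defined analogously with (μ'_t) in place of (μ_t). Then |V − V'| ≤ (L_R + γ T L_P r_max) Σ_{t=k}^T γ^{t−k} ‖μ_t − μ'_t‖₁. -/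
open Finset

variable {S A Z : Type*} [Fintype S] [Fintype A] [Fintype Z] [Nonempty S] [Nonempty A] [Nonempty Z]

/-- Expected return-to-go `E[Σ_{i=t}^{t+n} γ^{i−t} r(s_i, a_i, μ_i)]` for fixed actions
`as` and a fixed population-distribution sequence `μs`, with `s_{i+1} ~ P(·|s_i,a_i,μ_i)`. -/
noncomputable def Vseq (P : S → A → ProbVec S → ProbVec S) (r : S → A → ProbVec S → ℝ)
    (γ : ℝ) (as : ℕ → A) (μs : ℕ → ProbVec S) : ℕ → ℕ → S → ℝ
  | 0, t, s => r s (as t) (μs t)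
  | n + 1, t, s => r s (as t) (μs t) + γ * ∑ s', (P s (as t) (μs t)).1 s' *
      Vseq P r γ as μs n (t + 1) s'

lemma l1dist_nonneg' {X : Type*} [Fintype X] (p q : X → ℝ) : 0 ≤ l1dist p q :=
  Finset.sum_nonneg fun x _ => abs_nonneg _

lemma Vseq_abs_le (P : S → A → ProbVec S → ProbVec S) (r : S → A → ProbVec S → ℝ) (γ : ℝ)
    (hγ0 : 0 ≤ γ) (hγ1 : γ ≤ 1) (rmax : ℝ) (hrmax : 0 ≤ rmax)
    (hrb : ∀ s a μ, |r s a μ| ≤ rmax) (as : ℕ → A) (μs : ℕ → ProbVec S) :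
    ∀ n t s, |Vseq P r γ as μs n t s| ≤ ((n : ℝ) + 1) * rmax := by
  intro n
  induction n with
  | zero => intro t s; simpa [Vseq] using hrb s (as t) (μs t)
  | succ n ih =>
    intro t s
    have hsum : |∑ s', (P s (as t) (μs t)).1 s' * Vseq P r γ as μs n (t + 1) s'|
        ≤ ((n : ℝ) + 1) * rmax := by
      calc |∑ s', (P s (as t) (μs t)).1 s' * Vseq P r γ as μs n (t + 1) s'|
          ≤ ∑ s', |(P s (as t) (μs t)).1 s' * Vseq P r γ as μs n (t + 1) s'| :=
            Finset.abs_sum_le_sum_abs _ _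
        _ ≤ ∑ s', (P s (as t) (μs t)).1 s' * (((n : ℝ) + 1) * rmax) := by
            refine Finset.sum_le_sum fun s' _ => ?_
            rw [abs_mul, abs_of_nonneg ((P s (as t) (μs t)).2.1 s')]
            exact mul_le_mul_of_nonneg_left (ih (t + 1) s') ((P s (as t) (μs t)).2.1 s')
        _ = ((n : ℝ) + 1) * rmax := by
            rw [← Finset.sum_mul, (P s (as t) (μs t)).2.2, one_mul]
    have h1 : |Vseq P r γ as μs (n + 1) t s| ≤ rmax + γ * (((n : ℝ) + 1) * rmax) := by
      show |r s (as t) (μs t) + γ * _| ≤ _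
      refine (abs_add_le _ _).trans (add_le_add (hrb _ _ _) ?_)
      rw [abs_mul, abs_of_nonneg hγ0]
      exact mul_le_mul_of_nonneg_left hsum hγ0
    refine h1.trans ?_
    push_cast
    nlinarith [mul_nonneg (sub_nonneg.2 hγ1) (mul_nonneg (by positivity : (0:ℝ) ≤ (n:ℝ) + 1) hrmax)]

lemma Vseq_diff_le (P : S → A → ProbVec S → ProbVec S) (r : S → A → ProbVec S → ℝ) (γ : ℝ)
    (hγ0 : 0 ≤ γ) (hγ1 : γ ≤ 1)
    (rmax LR LP : ℝ) (hrmax : 0 ≤ rmax) (hLR : 0 ≤ LR) (hLP : 0 ≤ LP)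
    (hrb : ∀ s a μ, |r s a μ| ≤ rmax)
    (hrL : ∀ s a μ μ', |r s a μ - r s a μ'| ≤ LR * l1dist μ.1 μ'.1)
    (hPL : ∀ s a μ μ', l1dist (P s a μ).1 (P s a μ').1 ≤ LP * l1dist μ.1 μ'.1)
    (as : ℕ → A) (μs μs' : ℕ → ProbVec S) :
    ∀ n t s, |Vseq P r γ as μs n t s - Vseq P r γ as μs' n t s|
      ≤ ∑ i ∈ Finset.range (n + 1),
          γ ^ i * (LR + γ * ((n - i : ℕ) : ℝ) * LP * rmax)
            * l1dist (μs (t + i)).1 (μs' (t + i)).1 := by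
  intro n
  induction n with
  | zero =>
    intro t s
    simpa [Vseq] using hrL s (as t) (μs t) (μs' t)
  | succ n ih =>
    intro t s
    set Δ := l1dist (μs t).1 (μs' t).1 with hΔdef
    set B := ∑ i ∈ Finset.range (n + 1),
        γ ^ i * (LR + γ * ((n - i : ℕ) : ℝ) * LP * rmax)
          * l1dist (μs (t + 1 + i)).1 (μs' (t + 1 + i)).1 with hBdef
    have hΔ0 : 0 ≤ Δ := l1dist_nonneg' _ _
    have hB0 : 0 ≤ B := by
      refine Finset.sum_nonneg fun i _ => ?_
      have hc : 0 ≤ LR + γ * ((n - i : ℕ) : ℝ) * LP * rmax := by positivity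
      exact mul_nonneg (mul_nonneg (pow_nonneg hγ0 i) hc) (l1dist_nonneg' _ _)
    set p := (P s (as t) (μs t)).1 with hpdef
    set q := (P s (as t) (μs' t)).1 with hqdef
    set V := fun s' => Vseq P r γ as μs n (t + 1) s' with hVdef
    set W := fun s' => Vseq P r γ as μs' n (t + 1) s' with hWdef
    have hVb : ∀ s', |V s'| ≤ ((n : ℝ) + 1) * rmax := fun s' =>
      Vseq_abs_le P r γ hγ0 hγ1 rmax hrmax hrb as μs n (t + 1) s'
    have hIH : ∀ s', |V s' - W s'| ≤ B := fun s' => ih (t + 1) s'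
    have hsplit : (∑ s', p s' * V s') - (∑ s', q s' * W s')
        = ∑ s', ((p s' - q s') * V s' + q s' * (V s' - W s')) := by
      rw [← Finset.sum_sub_distrib]
      exact Finset.sum_congr rfl fun s' _ => by ring
    have hDS : |(∑ s', p s' * V s') - (∑ s', q s' * W s')|
        ≤ LP * Δ * (((n : ℝ) + 1) * rmax) + B := by
      rw [hsplit]
      calc |∑ s', ((p s' - q s') * V s' + q s' * (V s' - W s'))|
          ≤ ∑ s', |(p s' - q s') * V s' + q s' * (V s' - W s')| :=
            Finset.abs_sum_le_sum_abs _ _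
        _ ≤ ∑ s', (|p s' - q s'| * (((n : ℝ) + 1) * rmax) + q s' * B) := by
            refine Finset.sum_le_sum fun s' _ => ?_
            refine (abs_add_le _ _).trans (add_le_add ?_ ?_)
            · rw [abs_mul]
              exact mul_le_mul_of_nonneg_left (hVb s') (abs_nonneg _)
            · rw [abs_mul, abs_of_nonneg ((P s (as t) (μs' t)).2.1 s')]
              exact mul_le_mul_of_nonneg_left (hIH s') ((P s (as t) (μs' t)).2.1 s')
        _ = (∑ s', |p s' - q s'|) * (((n : ℝ) + 1) * rmax) + (∑ s', q s') * B := by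
            rw [Finset.sum_add_distrib, ← Finset.sum_mul, ← Finset.sum_mul]
        _ ≤ LP * Δ * (((n : ℝ) + 1) * rmax) + B := by
            have h1 : (∑ s', |p s' - q s'|) ≤ LP * Δ := hPL s (as t) (μs t) (μs' t)
            have h2 : (∑ s', q s') = 1 := (P s (as t) (μs' t)).2.2
            rw [h2, one_mul]
            exact add_le_add (mul_le_mul_of_nonneg_right h1 (by positivity)) le_rfl
    have hmain : |Vseq P r γ as μs (n + 1) t s - Vseq P r γ as μs' (n + 1) t s|
        ≤ LR * Δ + γ * (LP * Δ * (((n : ℝ) + 1) * rmax) + B) := by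
      show |(r s (as t) (μs t) + γ * ∑ s', p s' * V s')
          - (r s (as t) (μs' t) + γ * ∑ s', q s' * W s')| ≤ _
      have heq : (r s (as t) (μs t) + γ * ∑ s', p s' * V s')
          - (r s (as t) (μs' t) + γ * ∑ s', q s' * W s')
          = (r s (as t) (μs t) - r s (as t) (μs' t))
            + γ * ((∑ s', p s' * V s') - (∑ s', q s' * W s')) := by ring
      rw [heq]
      refine (abs_add_le _ _).trans (add_le_add (hrL s (as t) (μs t) (μs' t)) ?_)
      rw [abs_mul, abs_of_nonneg hγ0]
      exact mul_le_mul_of_nonneg_left hDS hγ0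
    refine hmain.trans (le_of_eq ?_)
    rw [Finset.sum_range_succ' _ (n + 1), add_comm]
    have hf0 : γ ^ 0 * (LR + γ * ((n + 1 - 0 : ℕ) : ℝ) * LP * rmax)
        * l1dist (μs (t + 0)).1 (μs' (t + 0)).1
        = LR * Δ + γ * (LP * Δ * (((n : ℝ) + 1) * rmax)) := by
      simp only [pow_zero, Nat.sub_zero, Nat.add_zero, one_mul, ← hΔdef]
      push_cast
      ring
    have hrest : (∑ i ∈ Finset.range (n + 1),
        γ ^ (i + 1) * (LR + γ * ((n + 1 - (i + 1) : ℕ) : ℝ) * LP * rmax)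
          * l1dist (μs (t + (i + 1))).1 (μs' (t + (i + 1))).1) = γ * B := by
      rw [hBdef, Finset.mul_sum]
      refine Finset.sum_congr rfl fun i hi => ?_
      have h1 : n + 1 - (i + 1) = n - i := by omega
      have h2 : t + (i + 1) = t + 1 + i := by omega
      rw [h1, h2, pow_succ]
      ring
    rw [hf0, hrest]
    ring

/-- Simulation lemma under mean-field perturbation:
`|V − V'| ≤ (L_R + γ T L_P r_max) Σ_{t=k}^T γ^{t−k} ‖μ_t − μ'_t‖₁`. -/
theorem simulation_lemma
    (P : S → A → ProbVec S → ProbVec S) (r : S → A → ProbVec S → ℝ) (γ : ℝ)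
    (hγ0 : 0 < γ) (hγ1 : γ ≤ 1)
    (rmax LR LP : ℝ)
    (hrb : ∀ s a μ, |r s a μ| ≤ rmax)
    (hrL : ∀ s a μ μ', |r s a μ - r s a μ'| ≤ LR * l1dist μ.1 μ'.1)
    (hPL : ∀ s a μ μ', l1dist (P s a μ).1 (P s a μ').1 ≤ LP * l1dist μ.1 μ'.1)
    (k T : ℕ) (hk : k ≤ T) (ν : ProbVec S) (as : ℕ → A) (μs μs' : ℕ → ProbVec S) :
    |(∑ s, ν.1 s * Vseq P r γ as μs (T - k) k s)
        - ∑ s, ν.1 s * Vseq P r γ as μs' (T - k) k s|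
      ≤ (LR + γ * T * LP * rmax) *
          ∑ t ∈ Finset.Icc k T, γ ^ (t - k) * l1dist (μs t).1 (μs' t).1 := by
  by_cases hall : ∀ t, μs t = μs' t
  · have hfun : μs = μs' := funext hall
    rw [hfun, sub_self, abs_zero]
    simp [l1dist]
  · push_neg at hall
    obtain ⟨t0, ht0⟩ := hall
    have hΔ0 : 0 < l1dist (μs t0).1 (μs' t0).1 := by
      rcases (l1dist_nonneg' (μs t0).1 (μs' t0).1).lt_or_eq with h | h
      · exact h
      · exfalso
        apply ht0
        apply Subtype.ext
        funext x
        have hx := (Finset.sum_eq_zero_iff_of_nonneg (fun x _ => abs_nonneg _)).1 h.symm x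
          (Finset.mem_univ x)
        have := abs_eq_zero.1 hx
        linarith
    have hγ0' : 0 ≤ γ := hγ0.le
    obtain ⟨s0⟩ := (inferInstance : Nonempty S)
    obtain ⟨a0⟩ := (inferInstance : Nonempty A)
    have hrmax : 0 ≤ rmax := (abs_nonneg _).trans (hrb s0 a0 ν)
    have hLR : 0 ≤ LR := by
      have h := (abs_nonneg _).trans (hrL s0 a0 (μs t0) (μs' t0))
      nlinarith
    have hLP : 0 ≤ LP := by
      have h := (l1dist_nonneg' _ _).trans (hPL s0 a0 (μs t0) (μs' t0))
      nlinarith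
    set n := T - k with hn
    have key := Vseq_diff_le P r γ hγ0' hγ1 rmax LR LP hrmax hLR hLP hrb hrL hPL as μs μs' n k
    set B := ∑ i ∈ Finset.range (n + 1),
        γ ^ i * (LR + γ * ((n - i : ℕ) : ℝ) * LP * rmax)
          * l1dist (μs (k + i)).1 (μs' (k + i)).1 with hBdef
    have step1 : |(∑ s, ν.1 s * Vseq P r γ as μs n k s)
        - ∑ s, ν.1 s * Vseq P r γ as μs' n k s| ≤ B := by
      calc |(∑ s, ν.1 s * Vseq P r γ as μs n k s)
            - ∑ s, ν.1 s * Vseq P r γ as μs' n k s|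
          = |∑ s, ν.1 s * (Vseq P r γ as μs n k s - Vseq P r γ as μs' n k s)| := by
            rw [← Finset.sum_sub_distrib]
            congr 1
            exact Finset.sum_congr rfl fun s _ => (mul_sub _ _ _).symm
        _ ≤ ∑ s, |ν.1 s * (Vseq P r γ as μs n k s - Vseq P r γ as μs' n k s)| :=
            Finset.abs_sum_le_sum_abs _ _
        _ ≤ ∑ s, ν.1 s * B := by
            refine Finset.sum_le_sum fun s _ => ?_
            rw [abs_mul, abs_of_nonneg (ν.2.1 s)]
            exact mul_le_mul_of_nonneg_left (key s) (ν.2.1 s)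
        _ = B := by rw [← Finset.sum_mul, ν.2.2, one_mul]
    have step2 : B ≤ (LR + γ * T * LP * rmax) *
        ∑ i ∈ Finset.range (n + 1), γ ^ i * l1dist (μs (k + i)).1 (μs' (k + i)).1 := by
      rw [Finset.mul_sum, hBdef]
      refine Finset.sum_le_sum fun i _ => ?_
      have hcast : ((n - i : ℕ) : ℝ) ≤ (T : ℝ) := by
        exact_mod_cast (by omega : n - i ≤ T)
      have hc : LR + γ * ((n - i : ℕ) : ℝ) * LP * rmax ≤ LR + γ * (T : ℝ) * LP * rmax := by
        nlinarith [mul_nonneg (mul_nonneg hγ0' hLP) hrmax]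
      calc γ ^ i * (LR + γ * ((n - i : ℕ) : ℝ) * LP * rmax)
            * l1dist (μs (k + i)).1 (μs' (k + i)).1
          ≤ γ ^ i * (LR + γ * (T : ℝ) * LP * rmax)
            * l1dist (μs (k + i)).1 (μs' (k + i)).1 :=
            mul_le_mul_of_nonneg_right
              (mul_le_mul_of_nonneg_left hc (pow_nonneg hγ0' i)) (l1dist_nonneg' _ _)
        _ = (LR + γ * (T : ℝ) * LP * rmax)
            * (γ ^ i * l1dist (μs (k + i)).1 (μs' (k + i)).1) := by ring
    have heq : ∑ t ∈ Finset.Icc k T, γ ^ (t - k) * l1dist (μs t).1 (μs' t).1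
        = ∑ i ∈ Finset.range (n + 1), γ ^ i * l1dist (μs (k + i)).1 (μs' (k + i)).1 := by
      rw [← Finset.Ico_add_one_right_eq_Icc, Finset.sum_Ico_eq_sum_range]
      have h1 : T + 1 - k = n + 1 := by omega
      rw [h1]
      exact Finset.sum_congr rfl fun i _ => by rw [Nat.add_sub_cancel_left]
    rw [heq]
    exact step1.trans step2
end

section
/- No profitable policy-swap deviation at an AMFCE: in a finite-horizon mean field game, suppose (π, ρ) is an Adaptive Mean Field Correlated Equilibrium. Then for every family of swap maps u_t : A → A (t = 0,…,T), the deviated policy u∘π defined by (u∘π)_t(a'|s,z) = Σ_{a∈A : u_t(a)=a'} π_t(a|s,z) satisfies J(u∘π, π, ρ) ≤ J(π, π, ρ); moreover Q_t^{u∘π}(s,a,μ,z;π) ≤ Q_t^π(s,a,μ,z;π) for every t, s, a, and every mean-field flow value μ of π at time t, z ∈ Z. -/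
/-!
Backward induction on the remaining horizon. Suppose `Q^{u∘π} ≤ Q^π` at time `t + 1`. The
continuation value of `u∘π` at time `t` averages `Q^{u∘π}` under `u∘π`; this is at most the
average of `Q^π` under `u∘π`, which is the average of `Q^π(·, u a)` under `π`, and the AMFCE
condition at time `t + 1` bounds that by the average of `Q^π` under `π`. The condition applies
because the mean field reached after one step with signal `z` is the flow of `π` along the signal
sequence modified to read `z` at time `t`. The same chain at `t = 0` compares the returns.
-/

open Finset

variable {S A Z : Type*} [Fintype S] [Fintype A] [Fintype Z] [Nonempty S] [Nonempty A] [Nonempty Z]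

section

omit [Nonempty S] [Nonempty A] [Nonempty Z]

noncomputable def polAvg (ρ : ProbVec Z) (p : Z → ProbVec A) (f : Z → A → ℝ) : ℝ :=
  ∑ z, ρ.1 z * ∑ a, (p z).1 a * f z a

theorem polAvg_mono (ρ : ProbVec Z) (p : Z → ProbVec A) {f g : Z → A → ℝ}
    (hfg : ∀ z a, f z a ≤ g z a) : polAvg ρ p f ≤ polAvg ρ p g :=
  sum_le_sum fun z _ => mul_le_mul_of_nonneg_left
    (sum_le_sum fun a _ => mul_le_mul_of_nonneg_left (hfg z a) ((p z).2.1 a)) (ρ.2.1 z)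

theorem polAvg_sub (ρ : ProbVec Z) (p : Z → ProbVec A) (f g : Z → A → ℝ) :
    polAvg ρ p f - polAvg ρ p g = ∑ z, ∑ a, ρ.1 z * (p z).1 a * (f z a - g z a) := by
  simp only [polAvg, ← sum_sub_distrib, mul_sum, mul_sub, mul_assoc]

theorem polAvg_map [DecidableEq A] (ρ : ProbVec Z) {p q : Z → ProbVec A} (u : A → A)
    (hq : ∀ z a', (q z).1 a' = ∑ a ∈ univ.filter (fun a => u a = a'), (p z).1 a)
    (f : Z → A → ℝ) : polAvg ρ q f = polAvg ρ p fun z a => f z (u a) := by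
  refine sum_congr rfl fun z _ => congrArg (ρ.1 z * ·) ?_
  rw [← sum_fiberwise univ u fun a => (p z).1 a * f z (u a)]
  refine sum_congr rfl fun a' _ => ?_
  rw [hq, sum_mul]
  exact sum_congr rfl fun a ha => by rw [(mem_filter.mp ha).2]

omit [Fintype Z] in
theorem mfFlow_congr (P : S → A → ProbVec S → ProbVec S) (μ0 : ProbVec S)
    (π : ℕ → S → Z → ProbVec A) {zs zs' : ℕ → Z} {t : ℕ} (h : ∀ k < t, zs k = zs' k) :
    mfFlow P μ0 π zs t = mfFlow P μ0 π zs' t := by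
  induction t with
  | zero => rfl
  | succ t ih =>
    rw [mfFlow, mfFlow, ih fun k hk => h k (Nat.lt_succ_of_lt hk), h t (Nat.lt_succ_self t)]

omit [Fintype Z] in
theorem mfStep_mfFlow (P : S → A → ProbVec S → ProbVec S) (μ0 : ProbVec S)
    (π : ℕ → S → Z → ProbVec A) (zs : ℕ → Z) (t : ℕ) (z : Z) :
    mfStep P (mfFlow P μ0 π zs t) (π t) z = mfFlow P μ0 π (Function.update zs t z) (t + 1) := by
  rw [mfFlow, Function.update_self,
    mfFlow_congr P μ0 π fun k hk => (Function.update_of_ne hk.ne z zs).symm]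

variable (P : S → A → ProbVec S → ProbVec S) (r : S → A → ProbVec S → ℝ) (γ : ℝ)

theorem Qval_succ (π π' : ℕ → S → Z → ProbVec A) (ρ : ℕ → ProbVec Z) (n t : ℕ) (s : S) (a : A)
    (μ : ProbVec S) (z : Z) :
    Qval P r γ π π' ρ (n + 1) t s a μ z = r s a μ + γ * ∑ s', (P s a μ).1 s' *
      polAvg (ρ (t + 1)) (π (t + 1) s') fun z' a' =>
        Qval P r γ π π' ρ n (t + 1) s' a' (mfStep P μ (π' t) z) z' := by
  simp only [Qval, polAvg]
  congr 2
  simp only [mul_sum]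
  rw [sum_comm]
  exact sum_congr rfl fun _ _ => sum_congr rfl fun _ _ => sum_congr rfl fun _ _ => mul_left_comm ..

theorem Vrem_eq_polAvg (π π' : ℕ → S → Z → ProbVec A) (ρ : ℕ → ProbVec Z) (n t : ℕ) (s : S)
    (μ : ProbVec S) :
    Vrem P r γ π π' ρ n t s μ = polAvg (ρ t) (π t s) fun z a => Qval P r γ π π' ρ n t s a μ z := by
  induction n generalizing t s μ with
  | zero => rfl
  | succ n ih => simp only [Vrem, Qval_succ, ih, polAvg]

variable {P r γ}

theorem Qval_succ_le_of_polAvg_le (hγ : 0 ≤ γ) {π₁ π₂ π' : ℕ → S → Z → ProbVec A}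
    {ρ : ℕ → ProbVec Z} {n t : ℕ} {s : S} {a : A} {μ : ProbVec S} {z : Z}
    (h : ∀ s', polAvg (ρ (t + 1)) (π₁ (t + 1) s')
        (fun z' a' => Qval P r γ π₁ π' ρ n (t + 1) s' a' (mfStep P μ (π' t) z) z') ≤
      polAvg (ρ (t + 1)) (π₂ (t + 1) s')
        (fun z' a' => Qval P r γ π₂ π' ρ n (t + 1) s' a' (mfStep P μ (π' t) z) z')) :
    Qval P r γ π₁ π' ρ (n + 1) t s a μ z ≤ Qval P r γ π₂ π' ρ (n + 1) t s a μ z := by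
  rw [Qval_succ, Qval_succ]
  gcongr with s'
  exacts [(P s a μ).2.1 s', h s']

variable {μ0 : ProbVec S} {T : ℕ} {π : ℕ → S → Z → ProbVec A} {ρ : ℕ → ProbVec Z}

theorem IsAMFCE.polAvg_Qval_comp_le (h : IsAMFCE P r γ μ0 T π ρ) {t : ℕ} (ht : t ≤ T)
    (zs : ℕ → Z) (s : S) (v : A → A) :
    (polAvg (ρ t) (π t s) fun z a => Qval P r γ π π ρ (T - t) t s (v a) (mfFlow P μ0 π zs t) z) ≤
      polAvg (ρ t) (π t s) fun z a => Qval P r γ π π ρ (T - t) t s a (mfFlow P μ0 π zs t) z :=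
  sub_nonpos.mp ((polAvg_sub _ _ _ _).trans_le (h t ht zs s v))

variable [DecidableEq A] {u : ℕ → A → A} {πu : ℕ → S → Z → ProbVec A}

/-- `πu` is the deviated policy `u∘π`. -/
def IsSwapPolicy (u : ℕ → A → A) (π πu : ℕ → S → Z → ProbVec A) : Prop :=
  ∀ t s z a', (πu t s z).1 a' = ∑ a ∈ univ.filter (fun a => u t a = a'), (π t s z).1 a

theorem IsAMFCE.polAvg_Qval_map_le (h : IsAMFCE P r γ μ0 T π ρ) (hπu : IsSwapPolicy u π πu)
    {t : ℕ} (ht : t ≤ T) (zs : ℕ → Z) (s : S)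
    (hQ : ∀ z a, Qval P r γ πu π ρ (T - t) t s a (mfFlow P μ0 π zs t) z ≤
      Qval P r γ π π ρ (T - t) t s a (mfFlow P μ0 π zs t) z) :
    (polAvg (ρ t) (πu t s) fun z a => Qval P r γ πu π ρ (T - t) t s a (mfFlow P μ0 π zs t) z) ≤
      polAvg (ρ t) (π t s) fun z a => Qval P r γ π π ρ (T - t) t s a (mfFlow P μ0 π zs t) z :=
  calc _ ≤ polAvg (ρ t) (πu t s) fun z a => Qval P r γ π π ρ (T - t) t s a (mfFlow P μ0 π zs t) z :=
        polAvg_mono _ _ hQ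
    _ = polAvg (ρ t) (π t s) fun z a =>
          Qval P r γ π π ρ (T - t) t s (u t a) (mfFlow P μ0 π zs t) z :=
        polAvg_map _ (u t) (hπu t s) _
    _ ≤ _ := h.polAvg_Qval_comp_le ht zs s (u t)

theorem IsAMFCE.Qval_map_le (h : IsAMFCE P r γ μ0 T π ρ) (hγ : 0 ≤ γ)
    (hπu : IsSwapPolicy u π πu) {t : ℕ} (ht : t ≤ T) (zs : ℕ → Z) (s : S) (a : A) (z : Z) :
    Qval P r γ πu π ρ (T - t) t s a (mfFlow P μ0 π zs t) z ≤
      Qval P r γ π π ρ (T - t) t s a (mfFlow P μ0 π zs t) z := by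
  induction hn : T - t generalizing t zs s a z with
  | zero => exact le_rfl
  | succ n ih =>
    have ht' : t + 1 ≤ T := by omega
    obtain rfl : T - (t + 1) = n := by omega
    refine Qval_succ_le_of_polAvg_le hγ fun s' => ?_
    rw [mfStep_mfFlow]
    exact h.polAvg_Qval_map_le hπu ht' _ s' fun z' a' => ih ht' _ s' a' z' rfl

theorem IsAMFCE.expRet_map_le [Nonempty Z] (h : IsAMFCE P r γ μ0 T π ρ) (hγ : 0 ≤ γ)
    (hπu : IsSwapPolicy u π πu) :
    expRet P r γ μ0 T πu π ρ ≤ expRet P r γ μ0 T π π ρ := by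
  let zs : ℕ → Z := fun _ => Classical.arbitrary Z
  refine sum_le_sum fun s _ => mul_le_mul_of_nonneg_left ?_ (μ0.2.1 s)
  rw [Vrem_eq_polAvg, Vrem_eq_polAvg]
  exact h.polAvg_Qval_map_le hπu T.zero_le zs s fun z a =>
    h.Qval_map_le hγ hπu T.zero_le zs s a z

end

theorem amfce_no_swap_deviation_general [DecidableEq A]
    (P : S → A → ProbVec S → ProbVec S) (r : S → A → ProbVec S → ℝ) (γ : ℝ)
    (hγ0 : 0 < γ) (μ0 : ProbVec S) (T : ℕ)
    (π : ℕ → S → Z → ProbVec A) (ρ : ℕ → ProbVec Z)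
    (hAMFCE : IsAMFCE P r γ μ0 T π ρ)
    (u : ℕ → A → A) (πu : ℕ → S → Z → ProbVec A)
    (hπu : ∀ t s z a', (πu t s z).1 a'
      = ∑ a ∈ Finset.univ.filter (fun a => u t a = a'), (π t s z).1 a) :
    expRet P r γ μ0 T πu π ρ ≤ expRet P r γ μ0 T π π ρ
    ∧ ∀ t ≤ T, ∀ zs : ℕ → Z, ∀ s : S, ∀ a : A, ∀ z : Z,
        Qval P r γ πu π ρ (T - t) t s a (mfFlow P μ0 π zs t) z
          ≤ Qval P r γ π π ρ (T - t) t s a (mfFlow P μ0 π zs t) z :=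
  ⟨hAMFCE.expRet_map_le hγ0.le hπu,
    fun _ ht zs s a z => hAMFCE.Qval_map_le hγ0.le hπu ht zs s a z⟩

/-- No profitable policy-swap deviation at an AMFCE: if `(π, ρ)` is an AMFCE, then for
every family of swap maps `u_t : A → A`, the deviated policy `u∘π` defined by
`(u∘π)_t(a'|s,z) = Σ_{a : u_t(a)=a'} π_t(a|s,z)` satisfies `J(u∘π, π, ρ) ≤ J(π, π, ρ)`;
moreover `Q_t^{u∘π}(s,a,μ,z;π) ≤ Q_t^π(s,a,μ,z;π)` for every `t ∈ {0,…,T}`, `s`, `a`,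
every mean-field flow value `μ` of `π` at time `t`, and every `z`. -/
theorem amfce_no_swap_deviation [DecidableEq A]
    (P : S → A → ProbVec S → ProbVec S) (r : S → A → ProbVec S → ℝ) (γ : ℝ)
    (hγ0 : 0 < γ) (hγ1 : γ ≤ 1) (μ0 : ProbVec S) (T : ℕ)
    (π : ℕ → S → Z → ProbVec A) (ρ : ℕ → ProbVec Z)
    (hAMFCE : IsAMFCE P r γ μ0 T π ρ)
    (u : ℕ → A → A) (πu : ℕ → S → Z → ProbVec A)
    (hπu : ∀ t s z a', (πu t s z).1 a'
      = ∑ a ∈ Finset.univ.filter (fun a => u t a = a'), (π t s z).1 a) :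
    expRet P r γ μ0 T πu π ρ ≤ expRet P r γ μ0 T π π ρ
    ∧ ∀ t ≤ T, ∀ zs : ℕ → Z, ∀ s : S, ∀ a : A, ∀ z : Z,
        Qval P r γ πu π ρ (T - t) t s a (mfFlow P μ0 π zs t) z
          ≤ Qval P r γ π π ρ (T - t) t s a (mfFlow P μ0 π zs t) z :=
  amfce_no_swap_deviation_general P r γ hγ0 μ0 T π ρ hAMFCE u πu hπu
end
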